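/- For every reflection s ∈ T and all a ∈ ⋀V, b ∈ A, one has ∇_s(a ⊗ b) = (α_s ∧ s(a)) ⊗ ((1−s)(b)/α_s). -/

import Mathlib

open scoped TensorProduct
noncomputable section

abbrev Vc (r : ℕ) := Fin r → ℂ
abbrev Pc (r : ℕ) := MvPolynomial (Fin r) ℂ
abbrev Ec (r : ℕ) := ExteriorAlgebra ℂ (Vc r)
abbrev Wc (r : ℕ) := Ec r ⊗[ℂ] Pc r

variable {r : ℕ}

/-- The standard symmetric bilinear form on `ℂ^r`. -/
def bil (x y : Vc r) : ℂ := ∑ i, x i * y i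

/-- A vector of `ℂ^r` viewed as a degree-one polynomial. -/
def linP (v : Vc r) : Pc r := ∑ i, MvPolynomial.C (v i) * MvPolynomial.X i

/-- The action of a linear automorphism of `V` on polynomials (i.e. on `S(V)`). -/
def pAct (g : Vc r ≃ₗ[ℂ] Vc r) : Pc r →ₐ[ℂ] Pc r :=
  MvPolynomial.aeval fun i => linP (g (Pi.single i 1))

/-- The action of a linear automorphism of `V` on the exterior algebra of `V`. -/
def eAct (g : Vc r ≃ₗ[ℂ] Vc r) : Ec r →ₐ[ℂ] Ec r :=
  ExteriorAlgebra.map (g : Vc r →ₗ[ℂ] Vc r)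

/-- The diagonal action of a linear automorphism of `V` on the Weil algebra `⋀V ⊗ S(V)`. -/
def wAct (g : Vc r ≃ₗ[ℂ] Vc r) : Wc r →ₐ[ℂ] Wc r :=
  Algebra.TensorProduct.map (eAct g) (pAct g)

/-- A vector of `V` viewed inside the exterior algebra. -/
def exti (v : Vc r) : Ec r := ExteriorAlgebra.ι ℂ v

/-- The de Rham differential on the Weil algebra: `d(q ⊗ k) = ∑ᵢ (xᵢ ∧ q) ⊗ ∂k/∂xᵢ`. -/
def deRham : Wc r →ₗ[ℂ] Wc r :=
  ∑ i, TensorProduct.map (LinearMap.mulLeft ℂ (exti (Pi.single i 1))) ((MvPolynomial.pderiv i).toLinearMap)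

/-- The directional derivative `∂_v`. -/
def dirDeriv (v : Vc r) : Pc r →ₗ[ℂ] Pc r := ∑ i, v i • (MvPolynomial.pderiv i).toLinearMap

/-- `g` is a reflection with root `a`, with respect to the standard bilinear form. -/
def IsReflRoot (g : Vc r ≃ₗ[ℂ] Vc r) (a : Vc r) : Prop :=
  a ≠ 0 ∧ g a = -a ∧ ∀ v, bil a v = 0 → g v = v

/-- The relation whose associated two-sided ideal is `𝒲J`, the ideal generated by the `ψᵢ`. -/
def relJ (ψ : Fin r → Pc r) : Wc r → Wc r → Prop :=
  fun x y => (∃ i, x = (1 : Ec r) ⊗ₜ[ℂ] ψ i) ∧ y = 0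

/-- `B = ⋀V ⊗ H = 𝒲/𝒲J`. -/
abbrev Bc (ψ : Fin r → Pc r) := RingQuot (relJ ψ)

/-- The quotient map `π : 𝒲 → B`. -/
def πB (ψ : Fin r → Pc r) : Wc r →ₐ[ℂ] Bc ψ := RingQuot.mkAlgHom ℂ (relJ ψ)

/-- The Solomon elements `pᵢ = π(d(1 ⊗ ψᵢ))`. -/
def pSol (ψ : Fin r → Pc r) (i : Fin r) : Bc ψ := πB ψ (deRham ((1 : Ec r) ⊗ₜ[ℂ] ψ i))

/-- The covariants `fᵢ(v) = π(1 ⊗ ∂_v ψᵢ)`. -/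
def fcov (ψ : Fin r → Pc r) (i : Fin r) (v : Vc r) : Bc ψ :=
  πB ψ ((1 : Ec r) ⊗ₜ[ℂ] dirDeriv v (ψ i))

/-- The `B`-valued pairing `E(φ, χ) = ∑ᵢ φ(xᵢ)·χ(xᵢ)` on maps `V → B`. -/
def Eform (ψ : Fin r → Pc r) (φ χ : Vc r → Bc ψ) : Bc ψ :=
  ∑ i, φ (Pi.single i 1) * χ (Pi.single i 1)


/-- The covariants `uᵢ = (r/(2|T|))·D∘fᵢ`, where `D` (given here as the operator `DB` on `B`
induced by `D = ∑_{s ∈ T} ∇ₛ`) is the Dunkl differential with `c = 1`. -/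
def ucov (ψ : Fin r → Pc r) (T : Finset (Vc r ≃ₗ[ℂ] Vc r)) (DB : Bc ψ →ₗ[ℂ] Bc ψ)
    (i : Fin r) (v : Vc r) : Bc ψ :=
  ((r : ℂ) / (2 * T.card)) • DB (fcov ψ i v)

/-! Since `s` fixes `αₛ^⊥` pointwise, `s v - v ∈ ℂ αₛ` for every `v`; as `αₛ ∧ αₛ = 0` and `αₛ`
graded-commutes with `⋀V`, this gives `αₛ ∧ s(a) = αₛ ∧ a`. Both sides of the claim, multiplied by
`1 ⊗ αₛ`, therefore equal `(αₛ ∧ a) ⊗ (b - s b)`, and multiplication by `1 ⊗ αₛ` is injective on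
`⋀V ⊗ A` because `A` is a domain and `⋀V` is flat over `ℂ`. -/

namespace ExteriorAlgebra

variable {R M : Type*} [CommRing R] [AddCommGroup M] [Module R M]

theorem ι_mul_eq_involute_mul_ι (m : M) (x : ExteriorAlgebra R M) :
    ι R m * x = CliffordAlgebra.involute x * ι R m := by
  induction x using ExteriorAlgebra.induction with
  | algebraMap c => simp [Algebra.commutes]
  | ι v =>
    rw [CliffordAlgebra.involute_ι, neg_mul, eq_neg_iff_add_eq_zero]
    exact ι_add_mul_swap m v
  | mul a b ha hb => rw [← mul_assoc, ha, mul_assoc, hb, map_mul, mul_assoc]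
  | add a b ha hb => rw [mul_add, ha, hb, map_add, add_mul]

theorem ι_mul_map_eq_of_forall_exists_add_smul (f : M →ₗ[R] M) (w : M)
    (hf : ∀ v, ∃ c : R, f v = v + c • w) (x : ExteriorAlgebra R M) :
    ι R w * map f x = ι R w * x := by
  induction x using ExteriorAlgebra.induction with
  | algebraMap c => simp
  | ι v =>
    obtain ⟨c, hc⟩ := hf v
    rw [map_apply_ι, hc, map_add, map_smul, mul_add, mul_smul_comm, ι_sq_zero, smul_zero,
      add_zero]
  | mul a b ha hb =>
    rw [map_mul, ← mul_assoc, ha, ι_mul_eq_involute_mul_ι, mul_assoc, hb, ← mul_assoc,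
      ← ι_mul_eq_involute_mul_ι, mul_assoc]
  | add a b ha hb => rw [map_add, mul_add, ha, hb, mul_add]

end ExteriorAlgebra

theorem Algebra.TensorProduct.isLeftRegular_one_tmul {R A B : Type*} [CommRing R] [Ring A]
    [Algebra R A] [Module.Flat R A] [Ring B] [Algebra R B] {p : B} (hp : IsLeftRegular p) :
    IsLeftRegular ((1 : A) ⊗ₜ[R] p) := by
  have h (x : A ⊗[R] B) : (1 ⊗ₜ p) * x = (LinearMap.mulLeft R p).lTensor A x := by
    induction x using TensorProduct.induction_on with
    | zero => simp
    | tmul a b => simp [Algebra.TensorProduct.tmul_mul_tmul]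
    | add x y hx hy => rw [mul_add, map_add, hx, hy]
  intro x y hxy
  exact Module.Flat.lTensor_preserves_injective_linearMap _ hp (by simpa only [h] using hxy)

theorem linP_ne_zero {w : Vc r} (hw : w ≠ 0) : linP w ≠ 0 := by
  contrapose! hw
  funext i
  simpa [linP, MvPolynomial.eval_sum, Pi.single_apply] using
    congrArg (MvPolynomial.eval (Pi.single i 1)) hw

theorem IsReflRoot.exists_add_smul {g : Vc r ≃ₗ[ℂ] Vc r} {a : Vc r} (h : IsReflRoot g a)
    (v : Vc r) : ∃ c : ℂ, g v = v + c • a := by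
  obtain ⟨ha, hga, hfix⟩ := h
  have hbil : bil a a ≠ 0 := fun h0 => ha (self_eq_neg.mp ((hga ▸ hfix a h0).symm))
  set t := bil a v / bil a a
  have horth : g (v - t • a) = v - t • a := hfix _ <| by
    change a ⬝ᵥ (v - t • a) = 0
    rw [dotProduct_sub, dotProduct_smul, smul_eq_mul, sub_eq_zero]
    exact (div_mul_cancel₀ _ hbil).symm
  refine ⟨-2 * t, ?_⟩
  rw [map_sub, map_smul, hga, sub_eq_iff_eq_add] at horth
  rw [horth]
  module

theorem statement5_general
    (T : Finset (Vc r ≃ₗ[ℂ] Vc r))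
    (α : (Vc r ≃ₗ[ℂ] Vc r) → Vc r)
    (hα : ∀ s ∈ T, IsReflRoot s (α s))
    -- `nab s` is the operator `∇ₛ = (αₛ ⊗ 1)·(1−s)/αₛ` on the Weil algebra, characterized by
    -- `(1 ⊗ αₛ) · ∇ₛ(ω) = (αₛ ⊗ 1) · (ω − s·ω)` (multiplication by `1 ⊗ αₛ` is injective),
    (nab : (Vc r ≃ₗ[ℂ] Vc r) → Wc r →ₗ[ℂ] Wc r)
    (hnab : ∀ s ∈ T, ∀ ω, ((1 : Ec r) ⊗ₜ[ℂ] linP (α s)) * nab s ω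
        = ((exti (α s)) ⊗ₜ[ℂ] (1 : Pc r)) * (ω - wAct s ω)) :
    ∀ s ∈ T, ∀ (a : Ec r) (b q : Pc r),
      linP (α s) * q = b - pAct s b →
      nab s (a ⊗ₜ[ℂ] b) = (exti (α s) * eAct s a) ⊗ₜ[ℂ] q := by
  intro s hs a b q hq
  have hroot : exti (α s) * eAct s a = exti (α s) * a :=
    ExteriorAlgebra.ι_mul_map_eq_of_forall_exists_add_smul _ _ (hα s hs).exists_add_smul a
  apply Algebra.TensorProduct.isLeftRegular_one_tmul
    (IsLeftCancelMulZero.mul_left_cancel_of_ne_zero (linP_ne_zero (hα s hs).1))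
  dsimp only
  rw [hnab s hs, wAct, Algebra.TensorProduct.map_tmul, mul_sub]
  simp only [Algebra.TensorProduct.tmul_mul_tmul, one_mul, hroot, ← TensorProduct.tmul_sub, hq]

/-- formula (2.5) of De Concini–Papi.
For every reflection `s ∈ T` and all `a ∈ ⋀V`, `b ∈ A`, one has
`∇ₛ(a ⊗ b) = (αₛ ∧ s(a)) ⊗ ((1−s)(b)/αₛ)`, where `(1−s)(b)/αₛ` is the (unique) polynomial
`q` with `αₛ·q = b − s(b)`. -/
theorem statement5
    -- `W` is a finite irreducible reflection group on `V = ℂ^r` (complexified euclidean space),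
    (W : Subgroup (Vc r ≃ₗ[ℂ] Vc r))
    (hWfin : Finite W)
    (hWorth : ∀ g ∈ W, ∀ x y, bil (g x) (g y) = bil x y)
    (hWirr : ∀ p : Submodule ℂ (Vc r), (∀ g ∈ W, ∀ v ∈ p, g v ∈ p) → p = ⊥ ∨ p = ⊤)
    -- `T` is the set of reflections of `W`, generating `W`, with roots `α s`,
    (T : Finset (Vc r ≃ₗ[ℂ] Vc r))
    (hT : ∀ g, g ∈ T ↔ g ∈ W ∧ ∃ a, IsReflRoot g a)
    (hWgen : Subgroup.closure (T : Set _) = W)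
    (α : (Vc r ≃ₗ[ℂ] Vc r) → Vc r)
    (hα : ∀ s ∈ T, IsReflRoot s (α s))
    -- `nab s` is the operator `∇ₛ = (αₛ ⊗ 1)·(1−s)/αₛ` on the Weil algebra, characterized by
    -- `(1 ⊗ αₛ) · ∇ₛ(ω) = (αₛ ⊗ 1) · (ω − s·ω)` (multiplication by `1 ⊗ αₛ` is injective),
    (nab : (Vc r ≃ₗ[ℂ] Vc r) → Wc r →ₗ[ℂ] Wc r)
    (hnab : ∀ s ∈ T, ∀ ω, ((1 : Ec r) ⊗ₜ[ℂ] linP (α s)) * nab s ω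
        = ((exti (α s)) ⊗ₜ[ℂ] (1 : Pc r)) * (ω - wAct s ω)) :
    ∀ s ∈ T, ∀ (a : Ec r) (b q : Pc r),
      linP (α s) * q = b - pAct s b →
      nab s (a ⊗ₜ[ℂ] b) = (exti (α s) * eAct s a) ⊗ₜ[ℂ] q :=
  statement5_general T α hα nab hnab
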